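/- arXiv:1210.0365 — 4 statements merged into one kernel-verified Lean document; each statement's English description precedes it below -/
import Mathlib

section
/- Let Ω > 0 and ω ∈ ℝ. Then lim_{t→∞} e^{−iωt} · (1/√π) ∫₀^t e^{−Ω(t−τ)} (t−τ)^{−1/2} (Ω + iω) e^{iωτ} dτ = (Ω + iω)^{1/2}, where (Ω + iω)^{1/2} is the principal complex square root. In other words, the shifted order-1/2 fractional derivative (D + Ω)^{1/2} applied to the time-harmonic signal e^{iωt} is asymptotically, as t → ∞, multiplication by (Ω + iω)^{1/2}. -/
/-!
Substituting `u = t - τ` turns the phase `e^{iωτ}` into `e^{iωt} e^{-iωu}`, so after multiplying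
by `e^{-iωt}` the damped kernel `e^{-Ωu} u^{-1/2}` becomes `u^{-1/2} e^{-(Ω+iω)u}` and the
expression equals `(Ω+iω)/√π · ∫₀^t u^{-1/2} e^{-(Ω+iω)u} du`. Since `Re (Ω+iω) = Ω > 0` the
integral converges as `t → ∞`, and the substitution `u = y²` reduces its value to the complex
Gaussian integral `∫₀^∞ e^{-z y²} dy = (π/z)^{1/2}/2`, i.e. `√π / z^{1/2}` for the principal
branch. Hence the limit is `z / z^{1/2} = z^{1/2}`.
-/

open MeasureTheory Filter Real

open Set

namespace Complex

lemma ofReal_mul_cpow {r : ℝ} (hr : 0 < r) (z : ℂ) (s : ℂ) :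
    ((r : ℂ) * z) ^ s = (r : ℂ) ^ s * z ^ s := by
  rcases eq_or_ne z 0 with rfl | hz
  · rcases eq_or_ne s 0 with rfl | hs <;> simp [*]
  have hr' : (r : ℂ) ≠ 0 := ofReal_ne_zero.mpr hr.ne'
  rw [cpow_def_of_ne_zero (mul_ne_zero hr' hz), log_ofReal_mul hr hz, add_mul, exp_add,
    cpow_def_of_ne_zero hr', cpow_def_of_ne_zero hz, ofReal_log hr.le]

lemma ofReal_div_cpow {r : ℝ} (hr : 0 < r) {z : ℂ} (hz : z.arg ≠ π) (s : ℂ) :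
    ((r : ℂ) / z) ^ s = (r : ℂ) ^ s / z ^ s := by
  rw [div_eq_mul_inv, ofReal_mul_cpow hr, inv_cpow _ _ hz, div_eq_mul_inv]

lemma div_cpow_one_half {z : ℂ} (hz : z ≠ 0) : z / z ^ (1 / 2 : ℂ) = z ^ (1 / 2 : ℂ) := by
  calc z / z ^ (1 / 2 : ℂ) = z ^ (1 - 1 / 2 : ℂ) := by rw [cpow_sub _ _ hz, cpow_one]
    _ = z ^ (1 / 2 : ℂ) := by norm_num

end Complex

section

open Complex

lemma integrableOn_rpow_mul_cexp_neg_mul {s : ℝ} (hs : -1 < s) {z : ℂ} (hz : 0 < z.re) :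
    IntegrableOn (fun x : ℝ => ((x ^ s : ℝ) : ℂ) * cexp (-(z * x))) (Ioi 0) := by
  have hmajorant : IntegrableOn (fun x : ℝ => x ^ s * Real.exp (-z.re * x)) (Ioi 0) := by
    simpa only [Real.rpow_one] using integrableOn_rpow_mul_exp_neg_mul_rpow hs one_pos hz
  refine hmajorant.mono' (by fun_prop) ?_
  filter_upwards [ae_restrict_mem measurableSet_Ioi] with x hx
  rw [norm_mul, norm_exp, norm_real, Real.norm_of_nonneg (Real.rpow_nonneg (le_of_lt hx) _)]
  simp

lemma integral_rpow_neg_one_half_mul_cexp_neg_mul_Ioi {z : ℂ} (hz : 0 < z.re) :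
    ∫ x in Ioi (0 : ℝ), ((x ^ (-(1 / 2) : ℝ) : ℝ) : ℂ) * cexp (-(z * x)) =
      √π / z ^ (1 / 2 : ℂ) := by
  have hsubst : ∀ y ∈ Ioi (0 : ℝ), ((2 : ℝ) * y ^ ((2 : ℝ) - 1)) •
      ((((y ^ (2 : ℝ)) ^ (-(1 / 2) : ℝ) : ℝ) : ℂ) * cexp (-(z * ((y ^ (2 : ℝ) : ℝ) : ℂ)))) =
        2 * cexp (-z * (y : ℂ) ^ 2) := by
    intro y (hy : 0 < y)
    have hroot : (y ^ (2 : ℝ)) ^ (-(1 / 2) : ℝ) = y⁻¹ := by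
      rw [← Real.rpow_mul hy.le, ← Real.rpow_neg_one]
      norm_num
    rw [hroot, Real.rpow_two, show (2 : ℝ) - 1 = 1 by norm_num, Real.rpow_one, real_smul]
    push_cast
    field_simp [hy.ne']
  have hpi : ((π : ℝ) : ℂ) ^ (1 / 2 : ℂ) = √π := by
    rw [Real.sqrt_eq_rpow, ofReal_cpow Real.pi_pos.le]
    norm_num
  have harg : z.arg ≠ π := (arg_lt_pi_iff.mpr (Or.inl hz.le)).ne
  rw [← integral_comp_rpow_Ioi_of_pos two_pos, setIntegral_congr_fun measurableSet_Ioi hsubst,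
    integral_const_mul, integral_gaussian_complex_Ioi hz, ofReal_div_cpow Real.pi_pos harg, hpi]
  ring

lemma intervalIntegral_comp_sub_mul_cexp (f : ℝ → ℂ) (c : ℂ) (t : ℝ) :
    ∫ τ in (0 : ℝ)..t, f (t - τ) * cexp (c * τ) =
      cexp (c * t) * ∫ u in (0 : ℝ)..t, f u * cexp (-(c * u)) := by
  have hsub := intervalIntegral.integral_comp_sub_left
    (fun u => f u * cexp (c * (t - u))) (a := 0) (b := t) t
  simp only [ofReal_sub, sub_sub_cancel, sub_self, sub_zero] at hsub
  rw [hsub, ← intervalIntegral.integral_const_mul]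
  refine intervalIntegral.integral_congr fun u _ => ?_
  rw [mul_left_comm, ← Complex.exp_add]
  ring_nf

lemma cexp_neg_mul_shifted_half_integral_eq (Ω ω t : ℝ) :
    cexp (-(I * ω * t)) * ((1 / √π : ℝ) : ℂ) *
        ∫ τ in (0 : ℝ)..t,
          ((Real.exp (-Ω * (t - τ)) * (t - τ) ^ (-(1 / 2) : ℝ) : ℝ) : ℂ) *
            ((Ω + ω * I) * cexp (I * ω * τ)) =
      (Ω + ω * I) / √π *
        ∫ u in (0 : ℝ)..t, ((u ^ (-(1 / 2) : ℝ) : ℝ) : ℂ) * cexp (-((Ω + ω * I) * u)) := by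
  set kernel : ℝ → ℂ := fun s => (Ω + ω * I) * ((Real.exp (-Ω * s) * s ^ (-(1 / 2) : ℝ) : ℝ) : ℂ)
  have hconv : ∀ τ : ℝ, ((Real.exp (-Ω * (t - τ)) * (t - τ) ^ (-(1 / 2) : ℝ) : ℝ) : ℂ) *
      ((Ω + ω * I) * cexp (I * ω * τ)) = kernel (t - τ) * cexp (I * ω * τ) := fun τ => by
    simp only [kernel]; ring
  have hdamped : ∀ u : ℝ, kernel u * cexp (-(I * ω * u)) =
      (Ω + ω * I) * (((u ^ (-(1 / 2) : ℝ) : ℝ) : ℂ) * cexp (-((Ω + ω * I) * u))) := fun u => by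
    simp only [kernel]
    push_cast
    rw [show -((Ω + ω * I) * (u : ℂ)) = -Ω * u + -(I * ω * u) by ring, Complex.exp_add]
    ring
  simp only [hconv, intervalIntegral_comp_sub_mul_cexp, hdamped,
    intervalIntegral.integral_const_mul]
  rw [← mul_assoc, ← mul_assoc]
  congr 1
  have hunit : cexp (-(I * ω * t)) * cexp (I * ω * t) = 1 := by
    rw [← Complex.exp_add, neg_add_cancel, Complex.exp_zero]
  push_cast
  linear_combination (Ω + ω * I) / √π * hunit

end

/-- The shifted order-1/2 fractional derivative `(D+Ω)^{1/2}` of the time-harmonic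
signal `e^{iωt}` is asymptotically multiplication by the principal square root
`(Ω+iω)^{1/2}`: `e^{−iωt} (1/√π) ∫₀^t e^{−Ω(t−τ)} (t−τ)^{−1/2} (Ω+iω) e^{iωτ} dτ
→ (Ω+iω)^{1/2}` as `t → ∞`. -/
theorem shifted_half_derivative_harmonic_limit (Ω ω : ℝ) (hΩ : 0 < Ω) :
    Tendsto
      (fun t : ℝ =>
        Complex.exp (-(Complex.I * (ω : ℂ) * (t : ℂ))) * ((1 / Real.sqrt π : ℝ) : ℂ) *
          ∫ τ in (0 : ℝ)..t,
            ((Real.exp (-Ω * (t - τ)) * (t - τ) ^ (-(1/2 : ℝ)) : ℝ) : ℂ) *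
              (((Ω : ℂ) + (ω : ℂ) * Complex.I) * Complex.exp (Complex.I * (ω : ℂ) * (τ : ℂ))))
      atTop
      (nhds (((Ω : ℂ) + (ω : ℂ) * Complex.I) ^ ((1/2 : ℂ)))) := by
  set z : ℂ := Ω + ω * Complex.I
  have hz : 0 < z.re := by simpa [z] using hΩ
  have hlim := (intervalIntegral_tendsto_integral_Ioi 0
    (integrableOn_rpow_mul_cexp_neg_mul (s := -(1 / 2)) (by norm_num) hz) tendsto_id).const_mul
      (z / √π)
  have hsqrt : (√π : ℂ) ≠ 0 := Complex.ofReal_ne_zero.mpr (Real.sqrt_pos.mpr Real.pi_pos).ne'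
  rw [integral_rpow_neg_one_half_mul_cexp_neg_mul_Ioi hz, div_mul_div_cancel₀ hsqrt,
    Complex.div_cpow_one_half (fun h => by simp [h] at hz)] at hlim
  exact hlim.congr fun t => (cexp_neg_mul_shifted_half_integral_eq Ω ω t).symm
end

section
/- Let λ_f, m, β ∈ ℝ, μ ∈ ℝ, and set λ₀ = λ_f − m β². Assume λ₀ + μ ≠ 0. Let u = (u₁, u₂) : ℝ² → ℝ² be of class C³ and ξ : ℝ² → ℝ of class C². Define the strain ε = (∇u + ∇uᵀ)/2, the stresses σ_{xx} = λ_f(∂u₁/∂x + ∂u₂/∂y) + 2μ ∂u₁/∂x − βmξ, σ_{yy} = λ_f(∂u₁/∂x + ∂u₂/∂y) + 2μ ∂u₂/∂y − βmξ, σ_{xy} = μ(∂u₁/∂y + ∂u₂/∂x), and the pressure p = m(−β(∂u₁/∂x + ∂u₂/∂y) + ξ). Then the Beltrami–Michell equation holds: ∂²σ_{xy}/∂x∂y = θ₀ ∂²σ_{xx}/∂x² + θ₁ ∂²σ_{yy}/∂x² + θ₂ ∂²p/∂x² + θ₁ ∂²σ_{xx}/∂y² + θ₀ ∂²σ_{yy}/∂y²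 + θ₂ ∂²p/∂y², where θ₀ = −λ₀/(4(λ₀ + μ)), θ₁ = (λ₀ + 2μ)/(4(λ₀ + μ)), θ₂ = μβ/(2(λ₀ + μ)). -/
/-! Once the constitutive law is substituted and mixed partials are commuted (u is C³, ξ is C²),
both sides are linear combinations of u₁,xxx, u₁,xyy, u₂,xxy, u₂,yyy, ξ,xx and ξ,yy. The θᵢ are
chosen so that the coefficients match: with λ_f = λ₀ + mβ², those of u₁,xxx, u₂,yyy, ξ,xx and ξ,yy
vanish and those of u₁,xyy and u₂,xxy equal μ. -/

noncomputable def pdx (f : ℝ × ℝ → ℝ) : ℝ × ℝ → ℝ := fun q => fderiv ℝ f q (1, 0)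

noncomputable def pdy (f : ℝ × ℝ → ℝ) : ℝ × ℝ → ℝ := fun q => fderiv ℝ f q (0, 1)

section DirectionalDerivative

variable {E : Type*} [NormedAddCommGroup E] [NormedSpace ℝ E]

noncomputable def pd (v : E) (f : E → ℝ) : E → ℝ := fun q => fderiv ℝ f q v

theorem pdx_eq_pd : pdx = pd (1, 0) := rfl

theorem pdy_eq_pd : pdy = pd (0, 1) := rfl

variable {v w : E} {f g : E → ℝ}

theorem ContDiff.contDiff_pd {n : WithTop ℕ∞} (hf : ContDiff ℝ (n + 1) f) (v : E) :
    ContDiff ℝ n (pd v f) :=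
  (ContinuousLinearMap.apply ℝ ℝ v).contDiff.comp (hf.fderiv_right le_rfl)

theorem pd_fun_add (hf : Differentiable ℝ f) (hg : Differentiable ℝ g) :
    pd v (fun q => f q + g q) = fun q => pd v f q + pd v g q := by
  ext q; simp [pd, fderiv_fun_add (hf q) (hg q)]

theorem pd_fun_sub (hf : Differentiable ℝ f) (hg : Differentiable ℝ g) :
    pd v (fun q => f q - g q) = fun q => pd v f q - pd v g q := by
  ext q; simp [pd, fderiv_fun_sub (hf q) (hg q)]

theorem pd_const_mul (hf : Differentiable ℝ f) (c : ℝ) :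
    pd v (fun q => c * f q) = fun q => c * pd v f q := by
  ext q; simp [pd, fderiv_const_mul (hf q)]

theorem pd_pd_apply {q : E} (hd : DifferentiableAt ℝ (fderiv ℝ f) q) :
    pd w (pd v f) q = fderiv ℝ (fderiv ℝ f) q w v := by
  change fderiv ℝ (ContinuousLinearMap.apply ℝ ℝ v ∘ fderiv ℝ f) q w = _
  rw [((ContinuousLinearMap.apply ℝ ℝ v).hasFDerivAt.comp q hd.hasFDerivAt).fderiv]
  rfl

theorem ContDiff.differentiable_pd (hf : ContDiff ℝ 2 f) (v : E) : Differentiable ℝ (pd v f) :=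
  (hf.contDiff_pd (n := 1) v).differentiable one_ne_zero

theorem pd_comm (hf : ContDiff ℝ 2 f) : pd v (pd w f) = pd w (pd v f) := by
  ext q
  have hd := (hf.fderiv_right (m := 1) le_rfl).differentiable one_ne_zero q
  rw [pd_pd_apply hd, pd_pd_apply hd]
  exact hf.contDiffAt.isSymmSndFDerivAt (by simp) v w

end DirectionalDerivative

/-- Beltrami–Michell compatibility equation for 2D isotropic poroelasticity:
for stresses and pressure derived from a displacement `u = (u₁,u₂)` of class `C³`
and a rate of fluid change `ξ` of class `C²` through the poroelastic constitutive law,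
`∂²σxy/∂x∂y = θ₀ ∂²σxx/∂x² + θ₁ ∂²σyy/∂x² + θ₂ ∂²p/∂x²
 + θ₁ ∂²σxx/∂y² + θ₀ ∂²σyy/∂y² + θ₂ ∂²p/∂y²`. -/
theorem beltrami_michell (lamf m β μ lam0 : ℝ)
    (hlam0 : lam0 = lamf - m * β ^ 2)
    (hden : lam0 + μ ≠ 0)
    (u₁ u₂ ξ : ℝ × ℝ → ℝ)
    (hu₁ : ContDiff ℝ 3 u₁) (hu₂ : ContDiff ℝ 3 u₂) (hξ : ContDiff ℝ 2 ξ)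
    (σxx σyy σxy p : ℝ × ℝ → ℝ)
    (hσxx : σxx = fun q => lamf * (pdx u₁ q + pdy u₂ q) + 2 * μ * pdx u₁ q - β * m * ξ q)
    (hσyy : σyy = fun q => lamf * (pdx u₁ q + pdy u₂ q) + 2 * μ * pdy u₂ q - β * m * ξ q)
    (hσxy : σxy = fun q => μ * (pdy u₁ q + pdx u₂ q))
    (hp : p = fun q => m * (-β * (pdx u₁ q + pdy u₂ q) + ξ q))
    (θ₀ θ₁ θ₂ : ℝ)
    (hθ₀ : θ₀ = -lam0 / (4 * (lam0 + μ)))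
    (hθ₁ : θ₁ = (lam0 + 2 * μ) / (4 * (lam0 + μ)))
    (hθ₂ : θ₂ = μ * β / (2 * (lam0 + μ))) :
    ∀ q : ℝ × ℝ,
      pdx (pdy σxy) q =
        θ₀ * pdx (pdx σxx) q + θ₁ * pdx (pdx σyy) q + θ₂ * pdx (pdx p) q +
        θ₁ * pdy (pdy σxx) q + θ₀ * pdy (pdy σyy) q + θ₂ * pdy (pdy p) q := by
  intro q
  have c2u₁ (v) : ContDiff ℝ 2 (pd v u₁) := hu₁.contDiff_pd v
  have c2u₂ (v) : ContDiff ℝ 2 (pd v u₂) := hu₂.contDiff_pd v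
  -- side conditions discharged by `fun_prop` below
  have d1u₁ (v) : Differentiable ℝ (pd v u₁) := (c2u₁ v).differentiable two_ne_zero
  have d1u₂ (v) : Differentiable ℝ (pd v u₂) := (c2u₂ v).differentiable two_ne_zero
  have d2u₁ (v w) : Differentiable ℝ (pd w (pd v u₁)) := (c2u₁ v).differentiable_pd w
  have d2u₂ (v w) : Differentiable ℝ (pd w (pd v u₂)) := (c2u₂ v).differentiable_pd w
  have dξ : Differentiable ℝ ξ := hξ.differentiable two_ne_zero
  have d1ξ (v) : Differentiable ℝ (pd v ξ) := hξ.differentiable_pd v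
  have u₁_xyy : pd (1, 0) (pd (0, 1) (pd (0, 1) u₁)) = pd (0, 1) (pd (0, 1) (pd (1, 0) u₁)) := by
    rw [pd_comm (c2u₁ _), pd_comm (hu₁.of_le (by norm_num))]
  have u₂_xxy : pd (0, 1) (pd (1, 0) u₂) = pd (1, 0) (pd (0, 1) u₂) :=
    pd_comm (hu₂.of_le (by norm_num))
  subst hσxx hσyy hσxy hp hθ₀ hθ₁ hθ₂ hlam0
  simp only [pdx_eq_pd, pdy_eq_pd]
  simp (disch := fun_prop) only [pd_fun_add, pd_fun_sub, pd_const_mul, u₁_xyy, u₂_xxy]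
  field_simp
  ring
end

section
/- Let Ω > 0 and θ > 0, and let w, ψ : ℝ → ℝ² be differentiable functions satisfying ψ′(t) = −(θ + Ω) ψ(t) + w′(t) + Ω w(t) for all t. Then for all t: d/dt [ |w(t) − ψ(t)|² / (2(θ + 2Ω)) ] − w(t)·ψ(t) = − ( Ω |w(t)|² + (θ + Ω) |ψ(t)|² ) / (θ + 2Ω). -/
open RealInnerProductSpace

/-! The derivative of `|w − ψ|²/2` is `⟪w − ψ, w′ − ψ′⟫`, and the ODE turns `w′ − ψ′` into
`(θ + Ω) ψ − Ω w`, which involves no derivative any more. Expanding the inner product gives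
`(θ + 2Ω) ⟪w, ψ⟫ − Ω |w|² − (θ + Ω) |ψ|²`, whose cross term cancels `w·ψ` after division
by `θ + 2Ω`. -/

theorem inner_sub_sub_eq_of_eq_neg_smul_add {E : Type*} [NormedAddCommGroup E]
    [InnerProductSpace ℝ E] {a b : ℝ} {v p v' p' : E} (hp' : p' = -a • p + v' + b • v) :
    ⟪v - p, v' - p'⟫ = (a + b) * ⟪v, p⟫ - (b * ‖v‖ ^ 2 + a * ‖p‖ ^ 2) := by
  have hdiff : v' - p' = a • p - b • v := by
    rw [hp']
    module
  rw [hdiff, inner_sub_left, inner_sub_right, inner_sub_right, real_inner_smul_right,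
    real_inner_smul_right, real_inner_smul_right, real_inner_smul_right,
    real_inner_self_eq_norm_sq, real_inner_self_eq_norm_sq, real_inner_comm p v]
  ring

/-- Pointwise energy identity underlying the decay of the Biot-JKD energy:
if `ψ′ = −(θ+Ω) ψ + w′ + Ω w`, then
`d/dt [ |w−ψ|²/(2(θ+2Ω)) ] − w·ψ = −(Ω|w|² + (θ+Ω)|ψ|²)/(θ+2Ω)`. -/
theorem pointwise_energy_identity (Ω θ : ℝ) (hΩ : 0 < Ω) (hθ : 0 < θ)
    (w ψ : ℝ → EuclideanSpace ℝ (Fin 2))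
    (hw : Differentiable ℝ w) (hψ : Differentiable ℝ ψ)
    (hode : ∀ t : ℝ, deriv ψ t = -(θ + Ω) • ψ t + deriv w t + Ω • w t) :
    ∀ t : ℝ,
      deriv (fun s => ‖w s - ψ s‖ ^ 2 / (2 * (θ + 2 * Ω))) t - ⟪w t, ψ t⟫ =
        -(Ω * ‖w t‖ ^ 2 + (θ + Ω) * ‖ψ t‖ ^ 2) / (θ + 2 * Ω) := by
  intro t
  have hc : θ + 2 * Ω ≠ 0 := by positivity
  have hderiv : HasDerivAt (fun s => ‖w s - ψ s‖ ^ 2 / (2 * (θ + 2 * Ω)))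
      (2 * ⟪w t - ψ t, deriv w t - deriv ψ t⟫ / (2 * (θ + 2 * Ω))) t :=
    ((hw t).hasDerivAt.sub (hψ t).hasDerivAt).norm_sq.div_const _
  rw [hderiv.deriv, inner_sub_sub_eq_of_eq_neg_smul_add (hode t)]
  field_simp
  ring
end

section
/- Let ρ, ρ_f, ρ_w, λ₀, μ, β ∈ ℝ with m > 0. Let u_s, W : ℝ² × ℝ → ℝ² be C² fields, compactly supported in the space variables for each time, and set v_s = ∂u_s/∂t, w = ∂W/∂t, ε = (∇u_s + ∇u_sᵀ)/2, ξ = −div W, p = m(−β tr ε + ξ) and σ = λ₀ (tr ε) I + 2με − β p I. Let g : ℝ² × ℝ → ℝ² be continuous, and suppose that ρ ∂v_s/∂t + ρ_f ∂w/∂t = div σ and ρ_f ∂v_s/∂t + ρ_w ∂w/∂t + g = −∇p on ℝ² × ℝ. Define E₁(t) = (1/2) ∫_{ℝ²} ( ρ|v_s|² + ρ_w|w|² + 2ρ_f v_s·w ) dx dy and E₂(t) = (1/2) ∫_{ℝ²} ( λ₀ (tr ε)² + 2μ ε:ε + p²/m ) dx dy. Then d(E₁ + E₂)/dt = − ∫_{ℝ²}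 g · w dx dy. -/
/-!
Differentiating the energy density `e` in time and inserting the two momentum equations gives the
local balance `∂ₜe = div (σ v_s - p w) - g · w`. For the strain part this uses the symmetry of
mixed partials, which turns `∂ₜε` into the symmetric gradient of `v_s` and gives
`∂ₜp / m = -β div v_s - div w`. All fields vanish outside `K` at every time, so the time derivative
can be taken under the integral sign and the divergence term integrates to zero.
-/

open MeasureTheory

/-- Partial derivative in the first (x) space variable, for functions of `(x, y, t)`. -/
noncomputable def pX (f : ℝ × ℝ × ℝ → ℝ) : ℝ × ℝ × ℝ → ℝ := fun q => fderiv ℝ f q (1, 0, 0)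

/-- Partial derivative in the second (y) space variable. -/
noncomputable def pY (f : ℝ × ℝ × ℝ → ℝ) : ℝ × ℝ × ℝ → ℝ := fun q => fderiv ℝ f q (0, 1, 0)

/-- Partial derivative in the time variable. -/
noncomputable def pT (f : ℝ × ℝ × ℝ → ℝ) : ℝ × ℝ × ℝ → ℝ := fun q => fderiv ℝ f q (0, 0, 1)

open Set Topology

section Calculus

variable {E F : Type*} [NormedAddCommGroup E] [NormedSpace ℝ E] [NormedAddCommGroup F]
  [NormedSpace ℝ F]

theorem fderiv_fderiv_apply_comm {f : E → F} (hf : ContDiff ℝ 2 f) (u v x : E) :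
    fderiv ℝ (fun y => fderiv ℝ f y u) x v = fderiv ℝ (fun y => fderiv ℝ f y v) x u := by
  have hd : DifferentiableAt ℝ (fderiv ℝ f) x :=
    (hf.fderiv_right one_add_one_eq_two.le).differentiable one_ne_zero x
  simpa [fderiv_clm_apply hd (differentiableAt_const _)] using
    (hf.contDiffAt.isSymmSndFDerivAt (by simp)).eq v u

theorem integral_fderiv_apply_eq_zero [FiniteDimensional ℝ E] [MeasurableSpace E] [BorelSpace E]
    (μ : Measure E) [μ.IsAddHaarMeasure] {f : E → ℝ} (hf : ContDiff ℝ 1 f)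
    (h : HasCompactSupport f) (v : E) : ∫ x, fderiv ℝ f x v ∂μ = 0 := by
  have hf' : Continuous fun x => fderiv ℝ f x v :=
    (hf.continuous_fderiv one_ne_zero).clm_apply continuous_const
  simpa using integral_mul_fderiv_eq_neg_fderiv_mul_of_integrable (μ := μ) (f := fun _ => (1 : ℝ))
    (by simp) (by simpa using hf'.integrable_of_hasCompactSupport (h.fderiv_apply (𝕜 := ℝ) v))
    (by simpa using hf.continuous.integrable_of_hasCompactSupport h)
    (fun _ _ => differentiableAt_const _) (fun x _ => hf.differentiable one_ne_zero x)

theorem hasDerivAt_integral_of_continuous_of_eq_zero_of_notMem {α : Type*} [TopologicalSpace α]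
    [T2Space α] [MeasurableSpace α] [OpensMeasurableSpace α] {μ : Measure α}
    [IsFiniteMeasureOnCompacts μ] {K : Set α} (hK : IsCompact K) {F F' : ℝ → α → ℝ}
    (hF : Continuous F.uncurry) (hF' : Continuous F'.uncurry) (hF_zero : ∀ t, ∀ a ∉ K, F t a = 0)
    (hderiv : ∀ t a, HasDerivAt (F · a) (F' t a) t) (t₀ : ℝ) :
    HasDerivAt (fun t => ∫ a, F t a ∂μ) (∫ a, F' t₀ a ∂μ) t₀ := by
  have hF'_zero : ∀ t, ∀ a ∉ K, F' t a = 0 := fun t a ha =>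
    (hderiv t a).unique (by simpa [hF_zero _ a ha] using hasDerivAt_const t (0 : ℝ))
  obtain ⟨C, hC⟩ := (isCompact_Icc.prod hK).exists_bound_of_continuousOn
    (f := F'.uncurry) (s := Icc (t₀ - 1) (t₀ + 1) ×ˢ K) hF'.continuousOn
  have hbound : ∀ a, ∀ t ∈ Metric.ball t₀ 1, ‖F' t a‖ ≤ K.indicator (fun _ => C) a := by
    intro a t ht
    by_cases ha : a ∈ K
    · rw [indicator_of_mem ha]
      rw [Real.ball_eq_Ioo] at ht
      exact hC (t, a) ⟨Ioo_subset_Icc_self ht, ha⟩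
    · simp [indicator_of_notMem ha, hF'_zero t a ha]
  have hslice : ∀ t, Continuous (F t) := fun t => hF.comp (Continuous.prodMk_right t)
  exact (hasDerivAt_integral_of_dominated_loc_of_deriv_le (Metric.ball_mem_nhds t₀ one_pos)
    (.of_forall fun t => (hslice t).aestronglyMeasurable)
    ((hslice t₀).integrable_of_hasCompactSupport (HasCompactSupport.intro hK (hF_zero t₀)))
    (hF'.comp (Continuous.prodMk_right t₀)).aestronglyMeasurable
    (.of_forall hbound)
    ((integrable_indicator_iff hK.measurableSet).2 (integrableOn_const hK.measure_lt_top.ne))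
    (.of_forall fun a t _ => hderiv t a)).2

end Calculus

section PartialDerivatives

variable {f : ℝ × ℝ × ℝ → ℝ}

theorem hasDerivAt_pX (q : ℝ × ℝ × ℝ) (hf : DifferentiableAt ℝ f q) :
    HasDerivAt (fun x => f (x, q.2.1, q.2.2)) (pX f q) q.1 :=
  hf.hasFDerivAt.comp_hasDerivAt q.1
    ((hasDerivAt_id _).prodMk ((hasDerivAt_const _ _).prodMk (hasDerivAt_const _ _)))

theorem hasDerivAt_pY (q : ℝ × ℝ × ℝ) (hf : DifferentiableAt ℝ f q) :
    HasDerivAt (fun y => f (q.1, y, q.2.2)) (pY f q) q.2.1 :=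
  hf.hasFDerivAt.comp_hasDerivAt q.2.1
    ((hasDerivAt_const _ _).prodMk ((hasDerivAt_id _).prodMk (hasDerivAt_const _ _)))

theorem hasDerivAt_pT (q : ℝ × ℝ × ℝ) (hf : DifferentiableAt ℝ f q) :
    HasDerivAt (fun t => f (q.1, q.2.1, t)) (pT f q) q.2.2 :=
  hf.hasFDerivAt.comp_hasDerivAt q.2.2
    ((hasDerivAt_const _ _).prodMk ((hasDerivAt_const _ _).prodMk (hasDerivAt_id _)))

theorem ContDiff.continuous_pX (hf : ContDiff ℝ 1 f) : Continuous (pX f) :=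
  (hf.continuous_fderiv one_ne_zero).clm_apply continuous_const

theorem ContDiff.continuous_pY (hf : ContDiff ℝ 1 f) : Continuous (pY f) :=
  (hf.continuous_fderiv one_ne_zero).clm_apply continuous_const

@[fun_prop]
theorem ContDiff.pX (hf : ContDiff ℝ 2 f) : ContDiff ℝ 1 (pX f) :=
  (hf.fderiv_right one_add_one_eq_two.le).clm_apply contDiff_const

@[fun_prop]
theorem ContDiff.pY (hf : ContDiff ℝ 2 f) : ContDiff ℝ 1 (pY f) :=
  (hf.fderiv_right one_add_one_eq_two.le).clm_apply contDiff_const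

@[fun_prop]
theorem ContDiff.pT (hf : ContDiff ℝ 2 f) : ContDiff ℝ 1 (pT f) :=
  (hf.fderiv_right one_add_one_eq_two.le).clm_apply contDiff_const

theorem pT_pX_comm (hf : ContDiff ℝ 2 f) (q : ℝ × ℝ × ℝ) : pT (pX f) q = pX (pT f) q :=
  fderiv_fderiv_apply_comm hf _ _ q

theorem pT_pY_comm (hf : ContDiff ℝ 2 f) (q : ℝ × ℝ × ℝ) : pT (pY f) q = pY (pT f) q :=
  fderiv_fderiv_apply_comm hf _ _ q

end PartialDerivatives

def VanishesOutside (K : Set (ℝ × ℝ)) (f : ℝ × ℝ × ℝ → ℝ) : Prop :=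
  ∀ x y t : ℝ, (x, y) ∉ K → f (x, y, t) = 0

section SpatialSupport

variable {K : Set (ℝ × ℝ)} {f g : ℝ × ℝ × ℝ → ℝ}

theorem contDiff_slice (hf : ContDiff ℝ 1 f) (t : ℝ) :
    ContDiff ℝ 1 fun s : ℝ × ℝ => f (s.1, s.2, t) :=
  hf.comp (contDiff_fst.prodMk (contDiff_snd.prodMk contDiff_const))

theorem fderiv_slice_apply (hf : ContDiff ℝ 1 f) (t : ℝ) (s v : ℝ × ℝ) :
    fderiv ℝ (fun s : ℝ × ℝ => f (s.1, s.2, t)) s v = fderiv ℝ f (s.1, s.2, t) (v.1, v.2, 0) := by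
  have hι : HasFDerivAt (fun s : ℝ × ℝ => ((s.1, s.2, t) : ℝ × ℝ × ℝ))
      ((ContinuousLinearMap.fst ℝ ℝ ℝ).prod ((ContinuousLinearMap.snd ℝ ℝ ℝ).prod 0)) s :=
    hasFDerivAt_fst.prodMk (hasFDerivAt_snd.prodMk (hasFDerivAt_const _ _))
  rw [show (fun s : ℝ × ℝ => f (s.1, s.2, t)) = f ∘ fun s => (s.1, s.2, t) from rfl,
    ((hf.differentiable one_ne_zero _).hasFDerivAt.comp s hι).fderiv]
  simp

namespace VanishesOutside

theorem add (hf : VanishesOutside K f) (hg : VanishesOutside K g) :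
    VanishesOutside K (fun q => f q + g q) := fun x y t h => by simp [hf x y t h, hg x y t h]

theorem mul_left (hg : VanishesOutside K g) (f : ℝ × ℝ × ℝ → ℝ) :
    VanishesOutside K (fun q => f q * g q) := fun x y t h => by simp [hg x y t h]

theorem fderiv_apply (hK : IsClosed K) (hf : VanishesOutside K f) (v : ℝ × ℝ × ℝ) :
    VanishesOutside K (fun q => fderiv ℝ f q v) := by
  intro x y t h
  have hopen : IsOpen {q : ℝ × ℝ × ℝ | (q.1, q.2.1) ∉ K} :=
    hK.isOpen_compl.preimage (continuous_fst.prodMk (continuous_fst.comp continuous_snd))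
  have hzero : f =ᶠ[𝓝 (x, y, t)] fun _ => 0 := by
    filter_upwards [hopen.mem_nhds h] with q hq using hf q.1 q.2.1 q.2.2 hq
  simp [hzero.fderiv_eq]

theorem pX (hK : IsClosed K) (hf : VanishesOutside K f) : VanishesOutside K (pX f) :=
  hf.fderiv_apply hK _

theorem pY (hK : IsClosed K) (hf : VanishesOutside K f) : VanishesOutside K (pY f) :=
  hf.fderiv_apply hK _

theorem pT (hK : IsClosed K) (hf : VanishesOutside K f) : VanishesOutside K (pT f) :=
  hf.fderiv_apply hK _

theorem hasCompactSupport_slice (hK : IsCompact K) (hf : VanishesOutside K f) (t : ℝ) :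
    HasCompactSupport fun s : ℝ × ℝ => f (s.1, s.2, t) :=
  HasCompactSupport.intro hK fun s hs => hf s.1 s.2 t hs

theorem integrable_slice (hK : IsCompact K) (hf : VanishesOutside K f) (hc : Continuous f)
    (t : ℝ) : Integrable fun s : ℝ × ℝ => f (s.1, s.2, t) :=
  (hc.comp (continuous_fst.prodMk (continuous_snd.prodMk continuous_const)))
    |>.integrable_of_hasCompactSupport (hf.hasCompactSupport_slice hK t)

end VanishesOutside

theorem integral_pX_slice_eq_zero (hK : IsCompact K) (hf : VanishesOutside K f)
    (hc : ContDiff ℝ 1 f) (t : ℝ) : ∫ s : ℝ × ℝ, pX f (s.1, s.2, t) = 0 := by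
  simpa only [pX, fderiv_slice_apply hc] using
    integral_fderiv_apply_eq_zero volume (contDiff_slice hc t)
    (hf.hasCompactSupport_slice hK t) (1, 0)

theorem integral_pY_slice_eq_zero (hK : IsCompact K) (hf : VanishesOutside K f)
    (hc : ContDiff ℝ 1 f) (t : ℝ) : ∫ s : ℝ × ℝ, pY f (s.1, s.2, t) = 0 := by
  simpa only [pY, fderiv_slice_apply hc] using
    integral_fderiv_apply_eq_zero volume (contDiff_slice hc t)
    (hf.hasCompactSupport_slice hK t) (0, 1)

theorem integral_pX_add_pY_sub_slice (hK : IsCompact K) {Φ₁ Φ₂ G : ℝ × ℝ × ℝ → ℝ}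
    (hΦ₁ : ContDiff ℝ 1 Φ₁) (hΦ₂ : ContDiff ℝ 1 Φ₂) (h₁ : VanishesOutside K Φ₁)
    (h₂ : VanishesOutside K Φ₂) {t : ℝ} (hG : Integrable fun s : ℝ × ℝ => G (s.1, s.2, t)) :
    ∫ s : ℝ × ℝ, (pX Φ₁ (s.1, s.2, t) + pY Φ₂ (s.1, s.2, t) - G (s.1, s.2, t))
      = -∫ s : ℝ × ℝ, G (s.1, s.2, t) := by
  have hX := (h₁.pX hK.isClosed).integrable_slice hK hΦ₁.continuous_pX t
  have hY := (h₂.pY hK.isClosed).integrable_slice hK hΦ₂.continuous_pY t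
  rw [integral_sub (f := fun s => pX Φ₁ (s.1, s.2, t) + pY Φ₂ (s.1, s.2, t)) (hX.add hY) hG,
    integral_add hX hY, integral_pX_slice_eq_zero hK h₁ hΦ₁, integral_pY_slice_eq_zero hK h₂ hΦ₂,
    zero_add, zero_sub]

theorem hasDerivAt_integral_slice (hK : IsCompact K) (hf : VanishesOutside K f)
    (hc : Continuous f) {f' : ℝ × ℝ × ℝ → ℝ} (hc' : Continuous f')
    (hderiv : ∀ x y t, HasDerivAt (fun τ => f (x, y, τ)) (f' (x, y, t)) t) (t : ℝ) :
    HasDerivAt (fun τ => ∫ s : ℝ × ℝ, f (s.1, s.2, τ)) (∫ s : ℝ × ℝ, f' (s.1, s.2, t)) t := by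
  have hι : Continuous fun p : ℝ × (ℝ × ℝ) => ((p.2.1, p.2.2, p.1) : ℝ × ℝ × ℝ) := by fun_prop
  exact hasDerivAt_integral_of_continuous_of_eq_zero_of_notMem (F := fun τ s => f (s.1, s.2, τ))
    (F' := fun τ s => f' (s.1, s.2, τ)) hK (hc.comp hι) (hc'.comp hι)
    (fun τ s hs => hf s.1 s.2 τ hs) (fun τ s => hderiv s.1 s.2 τ) t

end SpatialSupport

section Fields

variable (ρ ρf ρw lam0 μ β m : ℝ) (us₁ us₂ W₁ W₂ : ℝ × ℝ × ℝ → ℝ)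

noncomputable def volumetricStrain : ℝ × ℝ × ℝ → ℝ := fun q => pX us₁ q + pY us₂ q

noncomputable def shearStrain : ℝ × ℝ × ℝ → ℝ := fun q => (pY us₁ q + pX us₂ q) / 2

noncomputable def fluidContent : ℝ × ℝ × ℝ → ℝ := fun q => -(pX W₁ q + pY W₂ q)

noncomputable def porePressure : ℝ × ℝ × ℝ → ℝ := fun q =>
  m * (-β * volumetricStrain us₁ us₂ q + fluidContent W₁ W₂ q)

noncomputable def stressXX : ℝ × ℝ × ℝ → ℝ := fun q =>
  lam0 * volumetricStrain us₁ us₂ q + 2 * μ * pX us₁ q - β * porePressure β m us₁ us₂ W₁ W₂ q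

noncomputable def stressYY : ℝ × ℝ × ℝ → ℝ := fun q =>
  lam0 * volumetricStrain us₁ us₂ q + 2 * μ * pY us₂ q - β * porePressure β m us₁ us₂ W₁ W₂ q

noncomputable def stressXY : ℝ × ℝ × ℝ → ℝ := fun q => 2 * μ * shearStrain us₁ us₂ q

noncomputable def kineticEnergyDensity : ℝ × ℝ × ℝ → ℝ := fun q =>
  (1 / 2) * (ρ * (pT us₁ q ^ 2 + pT us₂ q ^ 2) + ρw * (pT W₁ q ^ 2 + pT W₂ q ^ 2)
    + 2 * ρf * (pT us₁ q * pT W₁ q + pT us₂ q * pT W₂ q))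

noncomputable def strainEnergyDensity : ℝ × ℝ × ℝ → ℝ := fun q =>
  (1 / 2) * (lam0 * volumetricStrain us₁ us₂ q ^ 2
    + 2 * μ * (pX us₁ q ^ 2 + 2 * shearStrain us₁ us₂ q ^ 2 + pY us₂ q ^ 2)
    + porePressure β m us₁ us₂ W₁ W₂ q ^ 2 / m)

noncomputable def energyDensity : ℝ × ℝ × ℝ → ℝ := fun q =>
  kineticEnergyDensity ρ ρf ρw us₁ us₂ W₁ W₂ q + strainEnergyDensity lam0 μ β m us₁ us₂ W₁ W₂ q

noncomputable def powerFluxX : ℝ × ℝ × ℝ → ℝ := fun q =>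
  stressXX lam0 μ β m us₁ us₂ W₁ W₂ q * pT us₁ q + stressXY μ us₁ us₂ q * pT us₂ q
    - porePressure β m us₁ us₂ W₁ W₂ q * pT W₁ q

noncomputable def powerFluxY : ℝ × ℝ × ℝ → ℝ := fun q =>
  stressXY μ us₁ us₂ q * pT us₁ q + stressYY lam0 μ β m us₁ us₂ W₁ W₂ q * pT us₂ q
    - porePressure β m us₁ us₂ W₁ W₂ q * pT W₂ q

end Fields

section Regularity

variable {ρ ρf ρw lam0 μ β m : ℝ} {us₁ us₂ W₁ W₂ : ℝ × ℝ × ℝ → ℝ}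

@[fun_prop]
theorem contDiff_porePressure (hus₁ : ContDiff ℝ 2 us₁) (hus₂ : ContDiff ℝ 2 us₂)
    (hW₁ : ContDiff ℝ 2 W₁) (hW₂ : ContDiff ℝ 2 W₂) :
    ContDiff ℝ 1 (porePressure β m us₁ us₂ W₁ W₂) := by
  unfold porePressure volumetricStrain fluidContent; fun_prop

@[fun_prop]
theorem contDiff_stressXX (hus₁ : ContDiff ℝ 2 us₁) (hus₂ : ContDiff ℝ 2 us₂)
    (hW₁ : ContDiff ℝ 2 W₁) (hW₂ : ContDiff ℝ 2 W₂) :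
    ContDiff ℝ 1 (stressXX lam0 μ β m us₁ us₂ W₁ W₂) := by
  unfold stressXX volumetricStrain; fun_prop

@[fun_prop]
theorem contDiff_stressYY (hus₁ : ContDiff ℝ 2 us₁) (hus₂ : ContDiff ℝ 2 us₂)
    (hW₁ : ContDiff ℝ 2 W₁) (hW₂ : ContDiff ℝ 2 W₂) :
    ContDiff ℝ 1 (stressYY lam0 μ β m us₁ us₂ W₁ W₂) := by
  unfold stressYY volumetricStrain; fun_prop

@[fun_prop]
theorem contDiff_stressXY (hus₁ : ContDiff ℝ 2 us₁) (hus₂ : ContDiff ℝ 2 us₂) :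
    ContDiff ℝ 1 (stressXY μ us₁ us₂) := by
  unfold stressXY shearStrain; fun_prop

theorem contDiff_powerFluxX (hus₁ : ContDiff ℝ 2 us₁) (hus₂ : ContDiff ℝ 2 us₂)
    (hW₁ : ContDiff ℝ 2 W₁) (hW₂ : ContDiff ℝ 2 W₂) :
    ContDiff ℝ 1 (powerFluxX lam0 μ β m us₁ us₂ W₁ W₂) := by
  unfold powerFluxX; fun_prop

theorem contDiff_powerFluxY (hus₁ : ContDiff ℝ 2 us₁) (hus₂ : ContDiff ℝ 2 us₂)
    (hW₁ : ContDiff ℝ 2 W₁) (hW₂ : ContDiff ℝ 2 W₂) :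
    ContDiff ℝ 1 (powerFluxY lam0 μ β m us₁ us₂ W₁ W₂) := by
  unfold powerFluxY; fun_prop

theorem contDiff_kineticEnergyDensity (hus₁ : ContDiff ℝ 2 us₁) (hus₂ : ContDiff ℝ 2 us₂)
    (hW₁ : ContDiff ℝ 2 W₁) (hW₂ : ContDiff ℝ 2 W₂) :
    ContDiff ℝ 1 (kineticEnergyDensity ρ ρf ρw us₁ us₂ W₁ W₂) := by
  unfold kineticEnergyDensity; fun_prop

theorem contDiff_strainEnergyDensity (hus₁ : ContDiff ℝ 2 us₁) (hus₂ : ContDiff ℝ 2 us₂)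
    (hW₁ : ContDiff ℝ 2 W₁) (hW₂ : ContDiff ℝ 2 W₂) :
    ContDiff ℝ 1 (strainEnergyDensity lam0 μ β m us₁ us₂ W₁ W₂) := by
  unfold strainEnergyDensity volumetricStrain shearStrain; fun_prop

end Regularity

section EnergyBalance

variable {ρ ρf ρw lam0 μ β m : ℝ} {us₁ us₂ W₁ W₂ : ℝ × ℝ × ℝ → ℝ}

theorem hasDerivAt_kineticEnergyDensity (hus₁ : ContDiff ℝ 2 us₁) (hus₂ : ContDiff ℝ 2 us₂)
    (hW₁ : ContDiff ℝ 2 W₁) (hW₂ : ContDiff ℝ 2 W₂) (q : ℝ × ℝ × ℝ) :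
    HasDerivAt (fun τ => kineticEnergyDensity ρ ρf ρw us₁ us₂ W₁ W₂ (q.1, q.2.1, τ))
      (pT us₁ q * (ρ * pT (pT us₁) q + ρf * pT (pT W₁) q)
        + pT us₂ q * (ρ * pT (pT us₂) q + ρf * pT (pT W₂) q)
        + pT W₁ q * (ρf * pT (pT us₁) q + ρw * pT (pT W₁) q)
        + pT W₂ q * (ρf * pT (pT us₂) q + ρw * pT (pT W₂) q)) q.2.2 := by
  have hv : ∀ f, ContDiff ℝ 2 f →
      HasDerivAt (fun τ => pT f (q.1, q.2.1, τ)) (pT (pT f) q) q.2.2 :=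
    fun f hf => hasDerivAt_pT q (hf.pT.differentiable one_ne_zero q)
  have hv₁ := hv _ hus₁
  have hv₂ := hv _ hus₂
  have hw₁ := hv _ hW₁
  have hw₂ := hv _ hW₂
  refine (((((hv₁.pow 2).add (hv₂.pow 2)).const_mul ρ).add
    (((hw₁.pow 2).add (hw₂.pow 2)).const_mul ρw)).add
    (((hv₁.mul hw₁).add (hv₂.mul hw₂)).const_mul (2 * ρf))).const_mul (1 / 2) |>.congr_deriv ?_
  simp only [Nat.cast_ofNat]
  ring

theorem hasDerivAt_strainEnergyDensity (hus₁ : ContDiff ℝ 2 us₁) (hus₂ : ContDiff ℝ 2 us₂)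
    (hW₁ : ContDiff ℝ 2 W₁) (hW₂ : ContDiff ℝ 2 W₂) (q : ℝ × ℝ × ℝ)
    (hm : m ≠ 0) :
    HasDerivAt (fun τ => strainEnergyDensity lam0 μ β m us₁ us₂ W₁ W₂ (q.1, q.2.1, τ))
      (stressXX lam0 μ β m us₁ us₂ W₁ W₂ q * pX (pT us₁) q
        + stressXY μ us₁ us₂ q * (pY (pT us₁) q + pX (pT us₂) q)
        + stressYY lam0 μ β m us₁ us₂ W₁ W₂ q * pY (pT us₂) q
        - porePressure β m us₁ us₂ W₁ W₂ q * (pX (pT W₁) q + pY (pT W₂) q)) q.2.2 := by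
  have hX : ∀ f, ContDiff ℝ 2 f →
      HasDerivAt (fun τ => pX f (q.1, q.2.1, τ)) (pX (pT f) q) q.2.2 :=
    fun f hf => pT_pX_comm hf q ▸ hasDerivAt_pT q (hf.pX.differentiable one_ne_zero q)
  have hY : ∀ f, ContDiff ℝ 2 f →
      HasDerivAt (fun τ => pY f (q.1, q.2.1, τ)) (pY (pT f) q) q.2.2 :=
    fun f hf => pT_pY_comm hf q ▸ hasDerivAt_pT q (hf.pY.differentiable one_ne_zero q)
  have hdiv := (hX _ hus₁).add (hY _ hus₂)
  have hshear := ((hY _ hus₁).add (hX _ hus₂)).div_const 2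
  have hp := ((hdiv.const_mul (-β)).add ((hX _ hW₁).add (hY _ hW₂)).neg).const_mul m
  refine ((((hdiv.pow 2).const_mul lam0).add
    (((((hX _ hus₁).pow 2).add ((hshear.pow 2).const_mul 2)).add ((hY _ hus₂).pow 2)).const_mul
      (2 * μ))).add ((hp.pow 2).div_const m)).const_mul (1 / 2) |>.congr_deriv ?_
  simp only [stressXX, stressYY, stressXY, porePressure, volumetricStrain, shearStrain,
    fluidContent, Pi.add_apply, Pi.neg_apply, Prod.mk.eta, Nat.cast_ofNat]
  field_simp
  ring

theorem pX_powerFluxX (hus₁ : ContDiff ℝ 2 us₁) (hus₂ : ContDiff ℝ 2 us₂)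
    (hW₁ : ContDiff ℝ 2 W₁) (hW₂ : ContDiff ℝ 2 W₂) (q : ℝ × ℝ × ℝ) :
    pX (powerFluxX lam0 μ β m us₁ us₂ W₁ W₂) q =
      pX (stressXX lam0 μ β m us₁ us₂ W₁ W₂) q * pT us₁ q
        + stressXX lam0 μ β m us₁ us₂ W₁ W₂ q * pX (pT us₁) q
      + (pX (stressXY μ us₁ us₂) q * pT us₂ q + stressXY μ us₁ us₂ q * pX (pT us₂) q)
      - (pX (porePressure β m us₁ us₂ W₁ W₂) q * pT W₁ q
        + porePressure β m us₁ us₂ W₁ W₂ q * pX (pT W₁) q) := by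
  have d : ∀ f, ContDiff ℝ 1 f → HasDerivAt (fun x => f (x, q.2.1, q.2.2)) (pX f q) q.1 :=
    fun f hf => hasDerivAt_pX q (hf.differentiable one_ne_zero q)
  exact (d _ (contDiff_powerFluxX hus₁ hus₂ hW₁ hW₂)).unique
    ((((d _ (contDiff_stressXX hus₁ hus₂ hW₁ hW₂)).mul (d _ hus₁.pT)).add
      ((d _ (contDiff_stressXY hus₁ hus₂)).mul (d _ hus₂.pT))).sub
      ((d _ (contDiff_porePressure hus₁ hus₂ hW₁ hW₂)).mul (d _ hW₁.pT)))

theorem pY_powerFluxY (hus₁ : ContDiff ℝ 2 us₁) (hus₂ : ContDiff ℝ 2 us₂)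
    (hW₁ : ContDiff ℝ 2 W₁) (hW₂ : ContDiff ℝ 2 W₂) (q : ℝ × ℝ × ℝ) :
    pY (powerFluxY lam0 μ β m us₁ us₂ W₁ W₂) q =
      pY (stressXY μ us₁ us₂) q * pT us₁ q + stressXY μ us₁ us₂ q * pY (pT us₁) q
      + (pY (stressYY lam0 μ β m us₁ us₂ W₁ W₂) q * pT us₂ q
        + stressYY lam0 μ β m us₁ us₂ W₁ W₂ q * pY (pT us₂) q)
      - (pY (porePressure β m us₁ us₂ W₁ W₂) q * pT W₂ q
        + porePressure β m us₁ us₂ W₁ W₂ q * pY (pT W₂) q) := by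
  have d : ∀ f, ContDiff ℝ 1 f → HasDerivAt (fun y => f (q.1, y, q.2.2)) (pY f q) q.2.1 :=
    fun f hf => hasDerivAt_pY q (hf.differentiable one_ne_zero q)
  exact (d _ (contDiff_powerFluxY hus₁ hus₂ hW₁ hW₂)).unique
    ((((d _ (contDiff_stressXY hus₁ hus₂)).mul (d _ hus₁.pT)).add
      ((d _ (contDiff_stressYY hus₁ hus₂ hW₁ hW₂)).mul (d _ hus₂.pT))).sub
      ((d _ (contDiff_porePressure hus₁ hus₂ hW₁ hW₂)).mul (d _ hW₂.pT)))

theorem hasDerivAt_energyDensity (hus₁ : ContDiff ℝ 2 us₁) (hus₂ : ContDiff ℝ 2 us₂)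
    (hW₁ : ContDiff ℝ 2 W₁) (hW₂ : ContDiff ℝ 2 W₂) (q : ℝ × ℝ × ℝ)
    (hm : m ≠ 0) {g₁ g₂ : ℝ}
    (h1x : ρ * pT (pT us₁) q + ρf * pT (pT W₁) q
      = pX (stressXX lam0 μ β m us₁ us₂ W₁ W₂) q + pY (stressXY μ us₁ us₂) q)
    (h1y : ρ * pT (pT us₂) q + ρf * pT (pT W₂) q
      = pX (stressXY μ us₁ us₂) q + pY (stressYY lam0 μ β m us₁ us₂ W₁ W₂) q)
    (h2x : ρf * pT (pT us₁) q + ρw * pT (pT W₁) q + g₁ = -pX (porePressure β m us₁ us₂ W₁ W₂) q)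
    (h2y : ρf * pT (pT us₂) q + ρw * pT (pT W₂) q + g₂ = -pY (porePressure β m us₁ us₂ W₁ W₂) q) :
    HasDerivAt (fun τ => energyDensity ρ ρf ρw lam0 μ β m us₁ us₂ W₁ W₂ (q.1, q.2.1, τ))
      (pX (powerFluxX lam0 μ β m us₁ us₂ W₁ W₂) q + pY (powerFluxY lam0 μ β m us₁ us₂ W₁ W₂) q
        - (g₁ * pT W₁ q + g₂ * pT W₂ q)) q.2.2 := by
  refine ((hasDerivAt_kineticEnergyDensity hus₁ hus₂ hW₁ hW₂ q).add
    (hasDerivAt_strainEnergyDensity hus₁ hus₂ hW₁ hW₂ q hm)).congr_deriv ?_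
  rw [pX_powerFluxX hus₁ hus₂ hW₁ hW₂, pY_powerFluxY hus₁ hus₂ hW₁ hW₂]
  linear_combination pT us₁ q * h1x + pT us₂ q * h1y + pT W₁ q * h2x + pT W₂ q * h2y

end EnergyBalance

section Support

variable {ρ ρf ρw lam0 μ β m : ℝ} {us₁ us₂ W₁ W₂ : ℝ × ℝ × ℝ → ℝ} {K : Set (ℝ × ℝ)}

theorem vanishesOutside_kineticEnergyDensity (hK : IsClosed K) (hus₁ : VanishesOutside K us₁)
    (hus₂ : VanishesOutside K us₂) (hW₁ : VanishesOutside K W₁) (hW₂ : VanishesOutside K W₂) :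
    VanishesOutside K (kineticEnergyDensity ρ ρf ρw us₁ us₂ W₁ W₂) := fun x y t h => by
  simp [kineticEnergyDensity, hus₁.pT hK x y t h, hus₂.pT hK x y t h, hW₁.pT hK x y t h,
    hW₂.pT hK x y t h]

theorem vanishesOutside_strainEnergyDensity (hK : IsClosed K) (hus₁ : VanishesOutside K us₁)
    (hus₂ : VanishesOutside K us₂) (hW₁ : VanishesOutside K W₁) (hW₂ : VanishesOutside K W₂) :
    VanishesOutside K (strainEnergyDensity lam0 μ β m us₁ us₂ W₁ W₂) := fun x y t h => by
  simp [strainEnergyDensity, porePressure, volumetricStrain, shearStrain, fluidContent,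
    hus₁.pX hK x y t h, hus₁.pY hK x y t h, hus₂.pX hK x y t h, hus₂.pY hK x y t h,
    hW₁.pX hK x y t h, hW₂.pY hK x y t h]

theorem vanishesOutside_powerFluxX (hK : IsClosed K) (hus₁ : VanishesOutside K us₁)
    (hus₂ : VanishesOutside K us₂) (hW₁ : VanishesOutside K W₁) :
    VanishesOutside K (powerFluxX lam0 μ β m us₁ us₂ W₁ W₂) := fun x y t h => by
  simp [powerFluxX, hus₁.pT hK x y t h, hus₂.pT hK x y t h, hW₁.pT hK x y t h]

theorem vanishesOutside_powerFluxY (hK : IsClosed K) (hus₁ : VanishesOutside K us₁)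
    (hus₂ : VanishesOutside K us₂) (hW₂ : VanishesOutside K W₂) :
    VanishesOutside K (powerFluxY lam0 μ β m us₁ us₂ W₁ W₂) := fun x y t h => by
  simp [powerFluxY, hus₁.pT hK x y t h, hus₂.pT hK x y t h, hW₂.pT hK x y t h]

end Support

section Integrated

variable {ρ ρf ρw lam0 μ β m : ℝ} {us₁ us₂ W₁ W₂ : ℝ × ℝ × ℝ → ℝ} {K : Set (ℝ × ℝ)}

theorem integral_energyDensity_slice (hK : IsCompact K) (hus₁ : ContDiff ℝ 2 us₁)
    (hus₂ : ContDiff ℝ 2 us₂) (hW₁ : ContDiff ℝ 2 W₁) (hW₂ : ContDiff ℝ 2 W₂)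
    (h₁ : VanishesOutside K us₁) (h₂ : VanishesOutside K us₂) (h₃ : VanishesOutside K W₁)
    (h₄ : VanishesOutside K W₂) (t : ℝ) :
    ∫ s : ℝ × ℝ, energyDensity ρ ρf ρw lam0 μ β m us₁ us₂ W₁ W₂ (s.1, s.2, t)
      = (∫ s : ℝ × ℝ, kineticEnergyDensity ρ ρf ρw us₁ us₂ W₁ W₂ (s.1, s.2, t))
        + ∫ s : ℝ × ℝ, strainEnergyDensity lam0 μ β m us₁ us₂ W₁ W₂ (s.1, s.2, t) :=
  integral_add
    ((vanishesOutside_kineticEnergyDensity hK.isClosed h₁ h₂ h₃ h₄).integrable_slice hK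
      (contDiff_kineticEnergyDensity hus₁ hus₂ hW₁ hW₂).continuous t)
    ((vanishesOutside_strainEnergyDensity hK.isClosed h₁ h₂ h₃ h₄).integrable_slice hK
      (contDiff_strainEnergyDensity hus₁ hus₂ hW₁ hW₂).continuous t)

theorem hasDerivAt_integral_energyDensity (hK : IsCompact K) (hus₁ : ContDiff ℝ 2 us₁)
    (hus₂ : ContDiff ℝ 2 us₂) (hW₁ : ContDiff ℝ 2 W₁) (hW₂ : ContDiff ℝ 2 W₂)
    (h₁ : VanishesOutside K us₁) (h₂ : VanishesOutside K us₂) (h₃ : VanishesOutside K W₁)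
    (h₄ : VanishesOutside K W₂) (hm : m ≠ 0) {g₁ g₂ : ℝ × ℝ × ℝ → ℝ} (hg₁ : Continuous g₁)
    (hg₂ : Continuous g₂)
    (h1x : ∀ q, ρ * pT (pT us₁) q + ρf * pT (pT W₁) q
      = pX (stressXX lam0 μ β m us₁ us₂ W₁ W₂) q + pY (stressXY μ us₁ us₂) q)
    (h1y : ∀ q, ρ * pT (pT us₂) q + ρf * pT (pT W₂) q
      = pX (stressXY μ us₁ us₂) q + pY (stressYY lam0 μ β m us₁ us₂ W₁ W₂) q)
    (h2x : ∀ q, ρf * pT (pT us₁) q + ρw * pT (pT W₁) q + g₁ q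
      = -pX (porePressure β m us₁ us₂ W₁ W₂) q)
    (h2y : ∀ q, ρf * pT (pT us₂) q + ρw * pT (pT W₂) q + g₂ q
      = -pY (porePressure β m us₁ us₂ W₁ W₂) q) (t : ℝ) :
    HasDerivAt (fun τ => ∫ s : ℝ × ℝ, energyDensity ρ ρf ρw lam0 μ β m us₁ us₂ W₁ W₂ (s.1, s.2, τ))
      (-∫ s : ℝ × ℝ, (g₁ (s.1, s.2, t) * pT W₁ (s.1, s.2, t)
        + g₂ (s.1, s.2, t) * pT W₂ (s.1, s.2, t))) t := by
  have hKc := hK.isClosed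
  have hΦ₁ := contDiff_powerFluxX (lam0 := lam0) (μ := μ) (β := β) (m := m) hus₁ hus₂ hW₁ hW₂
  have hΦ₂ := contDiff_powerFluxY (lam0 := lam0) (μ := μ) (β := β) (m := m) hus₁ hus₂ hW₁ hW₂
  have hG : Continuous fun q => g₁ q * pT W₁ q + g₂ q * pT W₂ q :=
    (hg₁.mul hW₁.pT.continuous).add (hg₂.mul hW₂.pT.continuous)
  have hG₀ : VanishesOutside K fun q => g₁ q * pT W₁ q + g₂ q * pT W₂ q :=
    ((h₃.pT hKc).mul_left g₁).add ((h₄.pT hKc).mul_left g₂)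
  rw [← integral_pX_add_pY_sub_slice (G := fun q => g₁ q * pT W₁ q + g₂ q * pT W₂ q) hK hΦ₁ hΦ₂
    (vanishesOutside_powerFluxX hKc h₁ h₂ h₃) (vanishesOutside_powerFluxY hKc h₁ h₂ h₄)
    (hG₀.integrable_slice hK hG t)]
  exact hasDerivAt_integral_slice hK ((vanishesOutside_kineticEnergyDensity hKc h₁ h₂ h₃ h₄).add
    (vanishesOutside_strainEnergyDensity hKc h₁ h₂ h₃ h₄))
    ((contDiff_kineticEnergyDensity hus₁ hus₂ hW₁ hW₂).continuous.add
      (contDiff_strainEnergyDensity hus₁ hus₂ hW₁ hW₂).continuous)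
    ((hΦ₁.continuous_pX.add hΦ₂.continuous_pY).sub hG)
    (fun x y τ => hasDerivAt_energyDensity hus₁ hus₂ hW₁ hW₂ (x, y, τ) hm (h1x _) (h1y _)
      (h2x _) (h2y _)) t

end Integrated

/-- Energy balance for the 2D Biot poroelastic system with a general dissipation
force `g`: with kinetic energy `E₁` and potential energy `E₂`,
`d(E₁+E₂)/dt = − ∫_{ℝ²} g·w dx dy`. -/
theorem biot_energy_balance
    (ρ ρf ρw lam0 μ β m : ℝ) (hm : 0 < m)
    (us₁ us₂ W₁ W₂ : ℝ × ℝ × ℝ → ℝ)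
    (hus₁ : ContDiff ℝ 2 us₁) (hus₂ : ContDiff ℝ 2 us₂)
    (hW₁ : ContDiff ℝ 2 W₁) (hW₂ : ContDiff ℝ 2 W₂)
    (K : Set (ℝ × ℝ)) (hK : IsCompact K)
    (hsupp : ∀ x y t : ℝ, (x, y) ∉ K →
      us₁ (x, y, t) = 0 ∧ us₂ (x, y, t) = 0 ∧ W₁ (x, y, t) = 0 ∧ W₂ (x, y, t) = 0)
    (g₁ g₂ : ℝ × ℝ × ℝ → ℝ) (hg₁ : Continuous g₁) (hg₂ : Continuous g₂)
    -- velocities, strain, fluid content, pressure and stress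
    (v₁ v₂ w₁ w₂ εxx εyy εxy trε ξ p σxx σyy σxy : ℝ × ℝ × ℝ → ℝ)
    (hv₁ : v₁ = pT us₁) (hv₂ : v₂ = pT us₂)
    (hw₁ : w₁ = pT W₁) (hw₂ : w₂ = pT W₂)
    (hεxx : εxx = pX us₁) (hεyy : εyy = pY us₂)
    (hεxy : εxy = fun q => (pY us₁ q + pX us₂ q) / 2)
    (htrε : trε = fun q => εxx q + εyy q)
    (hξ : ξ = fun q => -(pX W₁ q + pY W₂ q))
    (hp : p = fun q => m * (-β * trε q + ξ q))
    (hσxx : σxx = fun q => lam0 * trε q + 2 * μ * εxx q - β * p q)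
    (hσyy : σyy = fun q => lam0 * trε q + 2 * μ * εyy q - β * p q)
    (hσxy : σxy = fun q => 2 * μ * εxy q)
    -- conservation of momentum
    (hmom1x : ∀ q : ℝ × ℝ × ℝ, ρ * pT v₁ q + ρf * pT w₁ q = pX σxx q + pY σxy q)
    (hmom1y : ∀ q : ℝ × ℝ × ℝ, ρ * pT v₂ q + ρf * pT w₂ q = pX σxy q + pY σyy q)
    (hmom2x : ∀ q : ℝ × ℝ × ℝ, ρf * pT v₁ q + ρw * pT w₁ q + g₁ q = -(pX p q))
    (hmom2y : ∀ q : ℝ × ℝ × ℝ, ρf * pT v₂ q + ρw * pT w₂ q + g₂ q = -(pY p q))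
    -- kinetic and potential energies
    (E₁ E₂ : ℝ → ℝ)
    (hE₁ : E₁ = fun t => (1/2) * ∫ s : ℝ × ℝ,
      (ρ * (v₁ (s.1, s.2, t) ^ 2 + v₂ (s.1, s.2, t) ^ 2)
        + ρw * (w₁ (s.1, s.2, t) ^ 2 + w₂ (s.1, s.2, t) ^ 2)
        + 2 * ρf * (v₁ (s.1, s.2, t) * w₁ (s.1, s.2, t) + v₂ (s.1, s.2, t) * w₂ (s.1, s.2, t))))
    (hE₂ : E₂ = fun t => (1/2) * ∫ s : ℝ × ℝ,
      (lam0 * trε (s.1, s.2, t) ^ 2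
        + 2 * μ * (εxx (s.1, s.2, t) ^ 2 + 2 * εxy (s.1, s.2, t) ^ 2 + εyy (s.1, s.2, t) ^ 2)
        + p (s.1, s.2, t) ^ 2 / m)) :
    ∀ t : ℝ,
      HasDerivAt (fun τ => E₁ τ + E₂ τ)
        (-(∫ s : ℝ × ℝ,
            (g₁ (s.1, s.2, t) * w₁ (s.1, s.2, t) + g₂ (s.1, s.2, t) * w₂ (s.1, s.2, t)))) t := by
  intro t
  -- afterwards `p` and `σ` are, up to unfolding, `porePressure` and `stressXX`, ... of `us`, `W`
  subst_vars
  have h₁ : VanishesOutside K us₁ := fun x y t h => (hsupp x y t h).1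
  have h₂ : VanishesOutside K us₂ := fun x y t h => (hsupp x y t h).2.1
  have h₃ : VanishesOutside K W₁ := fun x y t h => (hsupp x y t h).2.2.1
  have h₄ : VanishesOutside K W₂ := fun x y t h => (hsupp x y t h).2.2.2
  convert hasDerivAt_integral_energyDensity hK hus₁ hus₂ hW₁ hW₂ h₁ h₂ h₃ h₄ hm.ne' hg₁ hg₂
    hmom1x hmom1y hmom2x hmom2y t using 1
  funext τ
  rw [integral_energyDensity_slice hK hus₁ hus₂ hW₁ hW₂ h₁ h₂ h₃ h₄]
  congr 1 <;> exact (integral_const_mul (1 / 2 : ℝ) _).symm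
end
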